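/- In the setting of the optimization lemma (V ⊆ U, D(C) = ({X ∈ C} ∩ U) ∪ ({X ∉ C} ∩ V), ψ(C) = E[f(X)·1_{D(C)} + g(X)·1_{D(C)^c}], C* = {x ∈ E : f(x) − g(x) ≥ 0}), the maximal value equals ψ(C*) = E[(f(X) − g(X))^+ · 1_U] − E[(f(X) − g(X))^− · 1_V] + E[g(X)], where a^+ = max{a,0} and a^− = max{−a,0}. -/

import Mathlib

open MeasureTheory

/-- The effective stopping event of a player using stopping set `C`, when the other
players' declarations produce the events `U` and `V ⊆ U`:
`D(C) = ({X ∈ C} ∩ U) ∪ ({X ∉ C} ∩ V)`. -/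
def stopEvent {Ω E : Type*} (X : Ω → E) (U V : Set Ω) (C : Set E) : Set Ω :=
  (X ⁻¹' C ∩ U) ∪ ((X ⁻¹' C)ᶜ ∩ V)

/-- The expected payoff `ψ(C) = E[f(X)·1_{D(C)} + g(X)·1_{D(C)ᶜ}]`. -/
noncomputable def stopPayoff {Ω E : Type*} [MeasurableSpace Ω] (P : Measure Ω)
    (X : Ω → E) (f g : E → ℝ) (U V : Set Ω) (C : Set E) : ℝ :=
  ∫ ω, ((stopEvent X U V C).indicator (fun ω' => f (X ω')) ω +
        ((stopEvent X U V C)ᶜ).indicator (fun ω' => g (X ω')) ω) ∂P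

/-!
With `h = f - g`, the payoff is `ψ(C) = E[h(X) · 1_{D(C)}] + E[g(X)]`.
For `C* = {h ≥ 0}` the event `D(C*)` is the disjoint union of `{h(X) ≥ 0} ∩ U`, on which `h(X) = h(X)⁺`, and
`{h(X) < 0} ∩ V`, on which `h(X) = -h(X)⁻`.
-/

namespace Set

variable {α M : Type*}

theorem indicator_add_indicator_compl_apply [AddGroup M] (s : Set α) (f g : α → M) (a : α) :
    s.indicator f a + sᶜ.indicator g a = s.indicator (fun a => f a - g a) a + g a := by
  by_cases ha : a ∈ s <;> simp [ha]

theorem max_zero_eq_indicator_nonneg [Zero M] [LinearOrder M] (h : α → M) :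
    (fun a => max (h a) 0) = {a | 0 ≤ h a}.indicator h := by
  ext a
  by_cases ha : 0 ≤ h a
  · simp [ha]
  · simp [ha, (not_le.mp ha).le]

theorem max_neg_zero_eq_neg_indicator_compl_nonneg [AddGroup M] [LinearOrder M] [AddLeftMono M]
    (h : α → M) : (fun a => max (-h a) 0) = -{a | 0 ≤ h a}ᶜ.indicator h := by
  ext a
  by_cases ha : 0 ≤ h a
  · simp [ha]
  · simp [ha, (not_le.mp ha).le]

end Set

section SetIntegral

variable {Ω : Type*} [MeasurableSpace Ω] {μ : Measure Ω}

theorem setIntegral_max_zero {h : Ω → ℝ} (hA : MeasurableSet {ω | 0 ≤ h ω}) (U : Set Ω) :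
    ∫ ω in U, max (h ω) 0 ∂μ = ∫ ω in {ω | 0 ≤ h ω} ∩ U, h ω ∂μ := by
  rw [Set.max_zero_eq_indicator_nonneg, setIntegral_indicator hA, Set.inter_comm]

theorem setIntegral_max_neg_zero {h : Ω → ℝ} (hA : MeasurableSet {ω | 0 ≤ h ω})
    (V : Set Ω) :
    ∫ ω in V, max (-h ω) 0 ∂μ = -∫ ω in {ω | 0 ≤ h ω}ᶜ ∩ V, h ω ∂μ := by
  rw [Set.max_neg_zero_eq_neg_indicator_compl_nonneg, Pi.neg_def, integral_neg,
    setIntegral_indicator hA.compl, Set.inter_comm]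

end SetIntegral

section StopEvent

variable {Ω E : Type*} [MeasurableSpace Ω] (X : Ω → E) {U V : Set Ω} {C : Set E}

theorem measurableSet_stopEvent (hC : MeasurableSet (X ⁻¹' C)) (hU : MeasurableSet U)
    (hV : MeasurableSet V) : MeasurableSet (stopEvent X U V C) :=
  (hC.inter hU).union (hC.compl.inter hV)

theorem setIntegral_stopEvent {μ : Measure Ω} {φ : Ω → ℝ} (hC : MeasurableSet (X ⁻¹' C))
    (hV : MeasurableSet V) (hφ : Integrable φ μ) :
    ∫ ω in stopEvent X U V C, φ ω ∂μ =
      ∫ ω in X ⁻¹' C ∩ U, φ ω ∂μ + ∫ ω in (X ⁻¹' C)ᶜ ∩ V, φ ω ∂μ :=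
  setIntegral_union
    (disjoint_compl_right.mono Set.inter_subset_left Set.inter_subset_left)
    (hC.compl.inter hV) hφ.integrableOn hφ.integrableOn

theorem stopPayoff_eq_setIntegral_sub_add {P : Measure Ω} {f g : E → ℝ}
    (hD : MeasurableSet (stopEvent X U V C))
    (hfint : Integrable (fun ω => f (X ω)) P) (hgint : Integrable (fun ω => g (X ω)) P) :
    stopPayoff P X f g U V C =
      ∫ ω in stopEvent X U V C, f (X ω) - g (X ω) ∂P + ∫ ω, g (X ω) ∂P := by
  have hint : Integrable (fun ω => f (X ω) - g (X ω)) P := hfint.sub hgint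
  rw [← integral_indicator hD, ← integral_add (hint.indicator hD) hgint, stopPayoff]
  simp_rw [Set.indicator_add_indicator_compl_apply]

end StopEvent

theorem optimal_stopping_value_general {Ω E : Type*} [MeasurableSpace Ω] [MeasurableSpace E]
    (P : Measure Ω)
    (X : Ω → E) (hX : Measurable X)
    (f g : E → ℝ) (hf : Measurable f) (hg : Measurable g)
    (hfint : Integrable (fun ω => f (X ω)) P) (hgint : Integrable (fun ω => g (X ω)) P)
    (U V : Set Ω) (hU : MeasurableSet U) (hV : MeasurableSet V) :
    stopPayoff P X f g U V {x : E | 0 ≤ f x - g x} =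
      (∫ ω in U, max (f (X ω) - g (X ω)) 0 ∂P) -
        (∫ ω in V, max (-(f (X ω) - g (X ω))) 0 ∂P) + ∫ ω, g (X ω) ∂P := by
  have hA : MeasurableSet (X ⁻¹' {x | 0 ≤ f x - g x}) :=
    hX (measurableSet_le measurable_const (hf.sub hg))
  rw [stopPayoff_eq_setIntegral_sub_add X (measurableSet_stopEvent X hA hU hV) hfint hgint,
    setIntegral_stopEvent X (φ := fun ω => f (X ω) - g (X ω)) hA hV (hfint.sub hgint),
    Set.preimage_ofPred_eq, setIntegral_max_zero hA, setIntegral_max_neg_zero hA]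
  ring

/-- In the setting of the optimization lemma, the maximal value equals
`ψ(C*) = E[(f(X) - g(X))⁺ · 1_U] - E[(f(X) - g(X))⁻ · 1_V] + E[g(X)]`, where
`a⁺ = max{a,0}`, `a⁻ = max{-a,0}` and `C* = {x : f(x) - g(x) ≥ 0}`. -/
theorem optimal_stopping_value {Ω E : Type*} [MeasurableSpace Ω] [MeasurableSpace E]
    (P : Measure Ω) [IsProbabilityMeasure P]
    (X : Ω → E) (hX : Measurable X)
    (f g : E → ℝ) (hf : Measurable f) (hg : Measurable g)
    (hfint : Integrable (fun ω => f (X ω)) P) (hgint : Integrable (fun ω => g (X ω)) P)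
    (U V : Set Ω) (hU : MeasurableSet U) (hV : MeasurableSet V) (hVU : V ⊆ U) :
    stopPayoff P X f g U V {x : E | 0 ≤ f x - g x} =
      (∫ ω in U, max (f (X ω) - g (X ω)) 0 ∂P) -
        (∫ ω in V, max (-(f (X ω) - g (X ω))) 0 ∂P) + ∫ ω, g (X ω) ∂P :=
  optimal_stopping_value_general P X hX f g hf hg hfint hgint U V hU hV
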